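/- Let L ≥ 2 and let G be a g.e.c. graph with unit threshold on a dense subset S of ℝ/Lℤ. If u, v ∈ S satisfy d(u,v) ≥ 1, then the graph distance between u and v in G equals ⌊d(u,v)⌋ + 1. -/

import Mathlib

/-- Geometric existential closure for a graph on a subset `S` of the circle. -/
def IsGEC {L : ℝ} {S : Set (AddCircle L)} (G : SimpleGraph S) : Prop :=
  ∀ (s : S) (A B : Finset S), Disjoint A B →
    (∀ a ∈ A, dist (a : AddCircle L) (s : AddCircle L) < 1) →
    (∀ b ∈ B, dist (b : AddCircle L) (s : AddCircle L) < 1) →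
    ∀ ε : ℝ, 0 < ε →
      ∃ v : S, v ∉ A ∧ v ∉ B ∧ (∀ a ∈ A, G.Adj v a) ∧ (∀ b ∈ B, ¬ G.Adj v b) ∧
        dist (v : AddCircle L) (s : AddCircle L) < ε

/-- Adjacent vertices are at circle distance less than 1. -/
def HasUnitThreshold {L : ℝ} {S : Set (AddCircle L)} (G : SimpleGraph S) : Prop :=
  ∀ u v : S, G.Adj u v → dist (u : AddCircle L) (v : AddCircle L) < 1

/-!
The lower bound is the triangle inequality: each edge has length less than `1`, so a walk from
`u` to `v ≠ u` is longer than `d(u,v)`. For the upper bound, cut the shorter arc from `u` to `v`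
into `n = ⌊d(u,v)⌋ + 1` pieces of length `d(u,v)/n < 1`. Geometric existential closure, applied
near the cut points (which density of `S` lets us move into `S`), produces vertices shadowing
them, each adjacent to the previous one, and a last vertex adjacent to both its predecessor
and `v`: a walk of length `n`.
-/

namespace AddCircle

variable {L : ℝ}

theorem exists_coe_eq_abs_eq_norm (z : AddCircle L) :
    ∃ r : ℝ, (r : AddCircle L) = z ∧ |r| = ‖z‖ := by
  obtain ⟨x, rfl⟩ := QuotientAddGroup.mk_surjective z
  refine ⟨x - round (L⁻¹ * x) * L, ?_, (norm_eq L).symm⟩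
  have hperiod : ((round (L⁻¹ * x) * L : ℝ) : AddCircle L) = 0 :=
    (AddCircle.coe_eq_zero_iff _).2 ⟨round (L⁻¹ * x), zsmul_eq_mul _ _⟩
  rw [AddCircle.coe_sub, hperiod, sub_zero]

theorem exists_chain (x y : AddCircle L) {n : ℕ} (hn : n ≠ 0) :
    ∃ p : ℕ → AddCircle L, p 0 = x ∧ p n = y ∧
      ∀ i, dist (p i) (p (i + 1)) ≤ dist x y / n := by
  obtain ⟨r, hr, hrnorm⟩ := exists_coe_eq_abs_eq_norm (y - x)
  have hn' : (n : ℝ) ≠ 0 := Nat.cast_ne_zero.2 hn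
  refine ⟨fun i ↦ x + ((i * (r / n) : ℝ) : AddCircle L), by simp, ?_, fun i ↦ ?_⟩
  · simp only [mul_div_cancel₀ r hn', hr, add_sub_cancel]
  · rw [dist_eq_norm, add_sub_add_left_eq_sub, ← AddCircle.coe_sub]
    calc ‖((i * (r / n) - ((i + 1 : ℕ) : ℝ) * (r / n) : ℝ) : AddCircle L)‖
        ≤ |i * (r / n) - ((i + 1 : ℕ) : ℝ) * (r / n)| := QuotientAddGroup.norm_mk_le_norm
      _ = dist x y / n := by
        rw [dist_comm, dist_eq_norm, ← hrnorm]
        push_cast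
        rw [show (i : ℝ) * (r / n) - (i + 1) * (r / n) = -(r / n) by ring, abs_neg, abs_div,
          Nat.abs_cast]

end AddCircle

variable {L : ℝ} {S : Set (AddCircle L)} {G : SimpleGraph S}

namespace HasUnitThreshold

theorem dist_le_length (hut : HasUnitThreshold G) {u v : S} (w : G.Walk u v) :
    dist (u : AddCircle L) v ≤ w.length := by
  induction w with
  | nil => simp
  | @cons x y z hxy _ ih =>
    rw [SimpleGraph.Walk.length_cons, Nat.cast_succ]
    linarith [hut x y hxy, dist_triangle (x : AddCircle L) y z]

theorem dist_lt_length (hut : HasUnitThreshold G) {u v : S} (huv : u ≠ v) (w : G.Walk u v) :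
    dist (u : AddCircle L) v < w.length := by
  cases w with
  | nil => exact absurd rfl huv
  | @cons _ y _ huy w =>
    rw [SimpleGraph.Walk.length_cons, Nat.cast_succ]
    linarith [hut u y huy, hut.dist_le_length w, dist_triangle (u : AddCircle L) y v]

theorem floor_dist_add_one_le_edist (hut : HasUnitThreshold G) {u v : S} (huv : u ≠ v) :
    ((⌊dist (u : AddCircle L) v⌋₊ + 1 : ℕ) : ℕ∞) ≤ G.edist u v := by
  refine le_sInf (Set.forall_mem_range.2 fun w ↦ ?_)
  have hlt : (⌊dist (u : AddCircle L) v⌋₊ : ℝ) < w.length :=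
    (Nat.floor_le dist_nonneg).trans_lt (hut.dist_lt_length huv w)
  exact_mod_cast Nat.succ_le_of_lt (by exact_mod_cast hlt)

end HasUnitThreshold

namespace IsGEC

theorem exists_adj_near (hgec : IsGEC G) (hS : Dense S) (A : Finset S) {x : AddCircle L}
    (hA : ∀ a ∈ A, dist (a : AddCircle L) x < 1) {ε : ℝ} (hε : 0 < ε) :
    ∃ y : S, (∀ a ∈ A, G.Adj y a) ∧ dist (y : AddCircle L) x < ε := by
  set U := Metric.ball x ε ∩ ⋂ a ∈ A, Metric.ball (a : AddCircle L) 1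
  have hU : IsOpen U :=
    Metric.isOpen_ball.inter (isOpen_biInter_finset fun _ _ ↦ Metric.isOpen_ball)
  have hxU : x ∈ U :=
    ⟨Metric.mem_ball_self hε, Set.mem_iInter₂.2 fun a ha ↦ Metric.mem_ball'.2 (hA a ha)⟩
  obtain ⟨s, hsS, hsU⟩ := hS.exists_mem_open hU ⟨x, hxU⟩
  obtain ⟨η, hη, hball⟩ := Metric.isOpen_iff.1 hU s hsU
  have hAs : ∀ a ∈ A, dist (a : AddCircle L) s < 1 := fun a ha ↦
    Metric.mem_ball'.1 (Set.mem_iInter₂.1 hsU.2 a ha)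
  obtain ⟨y, -, -, hadj, -, hy⟩ :=
    hgec ⟨s, hsS⟩ A ∅ (Finset.disjoint_empty_right A) hAs (by simp) η hη
  exact ⟨y, hadj, (hball hy).1⟩

variable (hgec : IsGEC G) (hS : Dense S) {n : ℕ} {p : ℕ → AddCircle L}
  (hp : ∀ i < n, dist (p i) (p (i + 1)) < 1)
include hgec hS hp

theorem exists_walk_shadowing_chain (u : S) (hu : (u : AddCircle L) = p 0) :
    ∀ k < n, ∃ x : S, ∃ w : G.Walk u x,
      w.length = k ∧ dist (x : AddCircle L) (p (k + 1)) < 1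
  | 0, hn => ⟨u, .nil, rfl, hu ▸ hp 0 hn⟩
  | k + 1, hk => by
    obtain ⟨x, w, hw, hx⟩ := exists_walk_shadowing_chain u hu k (by omega)
    -- land so close to `p (k + 1)` that `p (k + 2)` stays within distance `1`
    obtain ⟨y, hadj, hy⟩ := hgec.exists_adj_near hS {x} (by simpa using hx)
      (sub_pos.2 (hp (k + 1) hk))
    refine ⟨y, w.concat (hadj x (Finset.mem_singleton_self x)).symm, by simp [hw], ?_⟩
    linarith [dist_triangle (y : AddCircle L) (p (k + 1)) (p (k + 2))]

theorem exists_walk_of_chain (hn : 2 ≤ n) {u v : S} (hu : (u : AddCircle L) = p 0)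
    (hv : (v : AddCircle L) = p n) : ∃ w : G.Walk u v, w.length = n := by
  obtain ⟨x, w, hw, hx⟩ := exists_walk_shadowing_chain hgec hS hp u hu (n - 2) (by omega)
  have hxp : dist (x : AddCircle L) (p (n - 1)) < 1 := by
    rwa [show n - 2 + 1 = n - 1 by omega] at hx
  have hvp : dist (v : AddCircle L) (p (n - 1)) < 1 := by
    rw [hv, dist_comm, ← show n - 1 + 1 = n by omega]
    exact hp (n - 1) (by omega)
  obtain ⟨y, hadj, -⟩ :=
    hgec.exists_adj_near hS {x, v} (x := p (n - 1)) (by simp [hxp, hvp]) one_pos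
  refine ⟨(w.concat (hadj x (by simp)).symm).concat (hadj v (by simp)), ?_⟩
  simp only [SimpleGraph.Walk.length_concat, hw]
  omega

end IsGEC

theorem stmt_7_general (L : ℝ) (S : Set (AddCircle L)) (hSdense : Dense S)
    (G : SimpleGraph S) (hgec : IsGEC G) (hut : HasUnitThreshold G)
    (u v : S) (huv : 1 ≤ dist (u : AddCircle L) (v : AddCircle L)) :
    G.edist u v = (⌊dist (u : AddCircle L) (v : AddCircle L)⌋₊ : ℕ∞) + 1 := by
  have hne : u ≠ v := by rintro rfl; norm_num at huv
  set d := dist (u : AddCircle L) (v : AddCircle L)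
  set n := ⌊d⌋₊ + 1
  have hn : 2 ≤ n := Nat.succ_le_succ (Nat.one_le_floor_iff _ |>.2 huv)
  have hdn : d / n < 1 := (div_lt_one (by positivity)).2 (by simpa [n] using Nat.lt_floor_add_one d)
  obtain ⟨p, hp0, hpn, hstep⟩ := AddCircle.exists_chain (u : AddCircle L) v (n := n) (by omega)
  obtain ⟨w, hw⟩ := hgec.exists_walk_of_chain hSdense (fun i _ ↦ (hstep i).trans_lt hdn) hn
    hp0.symm hpn.symm
  have hupper : G.edist u v ≤ n := hw ▸ G.edist_le w
  exact_mod_cast le_antisymm hupper (hut.floor_dist_add_one_le_edist hne)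

/-- For a g.e.c. unit-threshold graph on a dense subset of `ℝ/Lℤ`, `L ≥ 2`: if `d(u,v) ≥ 1`,
then the graph distance between `u` and `v` equals `⌊d(u,v)⌋ + 1`. -/
theorem stmt_7 (L : ℝ) (hL : 2 ≤ L) (S : Set (AddCircle L)) (hSdense : Dense S)
    (hScount : S.Countable)
    (G : SimpleGraph S) (hgec : IsGEC G) (hut : HasUnitThreshold G)
    (u v : S) (huv : 1 ≤ dist (u : AddCircle L) (v : AddCircle L)) :
    G.edist u v = (⌊dist (u : AddCircle L) (v : AddCircle L)⌋₊ : ℕ∞) + 1 :=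
  stmt_7_general L S hSdense G hgec hut u v huv
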